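/- arXiv:1005.0616 — 2 statements merged into one kernel-verified Lean document; each statement's English description precedes it below -/
import Mathlib

section
/- Let Z_1, Z_2, … be i.i.d. Gaussian random variables with mean s ≥ 0 and variance σ² > 0. Define S_t = Z_1 + … + Z_t, μ_l = inf{t ≥ 1 : S_t ≥ l} for l ≥ 0, and R_{μ_l} = S_{μ_l} − l. Then sup_{l ≥ 0} E(R_{μ_l}) ≤ 2s + 4σ. -/
/-!
On the event that the level `l` has not been crossed by time `n`, the gap `l - S_n` is
nonnegative and is determined by `Z_1, …, Z_n`, hence independent of `Z_{n+1}`. Conditioning on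
the past, a crossing at time `n + 1` therefore contributes at most `K · P(crossing at n + 1)` as
soon as the increments satisfy the one-step bound `E (Z - u)⁺ ≤ K · P(Z ≥ u)` for all `u ≥ 0`;
summing over the disjoint crossing events gives `E R_{μ_l} ≤ K`.

For `Z ~ N(s, σ²)` with density `φ`, `E (Z - u)⁺ = σ² φ(u) + (s - u) P(Z > u)`, and Gordon's
Mills-ratio inequality `P(Z > u) ≥ σ² (u - s) / ((u - s)² + σ²) · φ(u)` yields
`σ² φ(u) ≤ (|u - s| + 4σ) P(Z > u)`. For `s, u ≥ 0` this is the one-step bound with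
`K = 2s + 4σ`.
-/

open MeasureTheory ProbabilityTheory Real Filter
open scoped ENNReal NNReal
open Set Function Topology

namespace ProbabilityTheory

lemma hasDerivAt_gaussianPDFReal (s : ℝ) (v : ℝ≥0) (x : ℝ) :
    HasDerivAt (gaussianPDFReal s v) (-((x - s) / v) * gaussianPDFReal s v x) x := by
  have h : HasDerivAt (fun x => -(x - s) ^ 2 / (2 * v)) (-((x - s) / v)) x := by
    refine ((((hasDerivAt_id x).sub_const s).pow 2).neg.div_const (2 * (v : ℝ))).congr_deriv ?_
    simp only [id, Nat.cast_ofNat]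
    ring
  refine (h.exp.const_mul (√(2 * π * v))⁻¹).congr_deriv ?_
  rw [gaussianPDFReal]
  ring

lemma tendsto_gaussianPDFReal_atTop (s : ℝ) (v : ℝ≥0) :
    Tendsto (gaussianPDFReal s v) atTop (𝓝 0) := by
  rcases eq_or_ne v 0 with rfl | hv
  · rw [gaussianPDFReal_zero_var]
    exact tendsto_const_nhds
  have h : Tendsto (fun x => -(x - s) ^ 2 / (2 * v)) atTop atBot := by
    simp only [neg_div]
    refine tendsto_neg_atTop_atBot.comp (Tendsto.atTop_div_const (by positivity) ?_)
    exact (tendsto_pow_atTop two_ne_zero).comp (tendsto_atTop_add_const_right _ (-s) tendsto_id)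
  simpa [gaussianPDFReal_def] using (tendsto_exp_atBot.comp h).const_mul (√(2 * π * v))⁻¹

lemma integrable_sub_mul_gaussianPDFReal (s : ℝ) (v : ℝ≥0) (u : ℝ) :
    Integrable fun x => (x - u) * gaussianPDFReal s v x := by
  rcases eq_or_ne v 0 with rfl | hv
  · simp
  have h := ((integrable_mul_exp_neg_mul_sq (b := (2 * v : ℝ)⁻¹) (by positivity)).comp_sub_right
    s).const_mul (√(2 * π * v))⁻¹ |>.add ((integrable_gaussianPDFReal s v).const_mul (s - u))
  refine h.congr (ae_of_all _ fun x => ?_)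
  simp only [gaussianPDFReal, Pi.add_apply]
  field_simp
  ring

lemma setIntegral_Ioi_sub_mul_gaussianPDFReal (s : ℝ) (v : ℝ≥0) (u : ℝ) :
    ∫ x in Ioi u, (x - s) * gaussianPDFReal s v x = v * gaussianPDFReal s v u := by
  rcases eq_or_ne v 0 with rfl | hv
  · simp
  have hderiv (x : ℝ) (_ : x ∈ Ici u) :
      HasDerivAt (fun x => -v * gaussianPDFReal s v x) ((x - s) * gaussianPDFReal s v x) x := by
    refine ((hasDerivAt_gaussianPDFReal s v x).const_mul _).congr_deriv ?_
    field_simp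
  have hlim : Tendsto (fun x => -v * gaussianPDFReal s v x) atTop (𝓝 0) := by
    simpa using (tendsto_gaussianPDFReal_atTop s v).const_mul (-v : ℝ)
  rw [integral_Ioi_of_hasDerivAt_of_tendsto' hderiv
    (integrable_sub_mul_gaussianPDFReal s v s).integrableOn hlim]
  ring

/-- Gordon's inequality for the Gaussian Mills ratio. -/
lemma mul_gaussianPDFReal_le_setIntegral_Ioi {s : ℝ} {v : ℝ≥0} (hv : v ≠ 0) {u : ℝ}
    (hu : √v ≤ u - s) :
    v * (u - s) / ((u - s) ^ 2 + v) * gaussianPDFReal s v u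
      ≤ ∫ x in Ioi u, gaussianPDFReal s v x := by
  have hv0 : (0 : ℝ) < v := by positivity
  set r : ℝ → ℝ := fun x => v * (x - s) / ((x - s) ^ 2 + v)
  set g' : ℝ → ℝ := fun x => (1 - 2 * v ^ 2 / ((x - s) ^ 2 + v) ^ 2) * gaussianPDFReal s v x
  have hderiv (x : ℝ) (_ : x ∈ Ici u) :
      HasDerivAt (fun x => -(r x * gaussianPDFReal s v x)) (g' x) x := by
    have hD : (x - s) ^ 2 + v ≠ 0 := by positivity
    have hnum : HasDerivAt (fun x => v * (x - s)) (v : ℝ) x := by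
      simpa using ((hasDerivAt_id x).sub_const s).const_mul (v : ℝ)
    have hden : HasDerivAt (fun x => (x - s) ^ 2 + v) (2 * (x - s)) x := by
      simpa [mul_comm] using (((hasDerivAt_id x).sub_const s).pow 2).add_const (v : ℝ)
    have hr : HasDerivAt r (v * (v - (x - s) ^ 2) / ((x - s) ^ 2 + v) ^ 2) x := by
      refine (hnum.div hden hD).congr_deriv ?_
      field_simp
      ring
    refine (hr.mul (hasDerivAt_gaussianPDFReal s v x)).neg.congr_deriv ?_
    simp only [r, g']
    field_simp
    ring
  have hg'_nonneg (x : ℝ) (hx : x ∈ Ioi u) : 0 ≤ g' x := by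
    have hvx : (v : ℝ) ≤ (x - s) ^ 2 := by
      have := Real.sq_sqrt hv0.le
      nlinarith [Real.sqrt_nonneg (v : ℝ), mem_Ioi.mp hx]
    have : 2 * (v : ℝ) ^ 2 / ((x - s) ^ 2 + v) ^ 2 ≤ 1 := by
      rw [div_le_one (by positivity)]
      nlinarith
    exact mul_nonneg (by linarith) (gaussianPDFReal_nonneg s v x)
  have hg'_le (x : ℝ) : g' x ≤ gaussianPDFReal s v x := by
    have : 0 ≤ 2 * (v : ℝ) ^ 2 / ((x - s) ^ 2 + v) ^ 2 := by positivity
    nlinarith [gaussianPDFReal_nonneg s v x]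
  have hr_le (x : ℝ) : ‖r x‖ ≤ √v / 2 := by
    have h := Real.sq_sqrt hv0.le
    have hD : 0 < (x - s) ^ 2 + v := by positivity
    rw [Real.norm_eq_abs, abs_div, abs_mul, abs_of_pos hv0, abs_of_pos hD, div_le_iff₀ hD]
    nlinarith [sq_nonneg (|x - s| - √v), sq_abs (x - s), abs_nonneg (x - s),
      Real.sqrt_nonneg (v : ℝ)]
  have hlim : Tendsto (fun x => -(r x * gaussianPDFReal s v x)) atTop (𝓝 0) := by
    refine squeeze_zero_norm (fun x => ?_)
      (by simpa using (tendsto_gaussianPDFReal_atTop s v).const_mul (√v / 2))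
    rw [norm_neg, norm_mul, Real.norm_of_nonneg (gaussianPDFReal_nonneg s v x)]
    exact mul_le_mul_of_nonneg_right (hr_le x) (gaussianPDFReal_nonneg s v x)
  have hg'_int := integrableOn_Ioi_deriv_of_nonneg' hderiv hg'_nonneg hlim
  calc v * (u - s) / ((u - s) ^ 2 + v) * gaussianPDFReal s v u = ∫ x in Ioi u, g' x := by
        rw [integral_Ioi_of_hasDerivAt_of_tendsto' hderiv hg'_int hlim]
        ring
    _ ≤ ∫ x in Ioi u, gaussianPDFReal s v x :=
        setIntegral_mono hg'_int (integrable_gaussianPDFReal s v).integrableOn hg'_le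

lemma mul_gaussianPDFReal_le_mul_setIntegral_Ioi {s : ℝ} {v : ℝ≥0} (hv : v ≠ 0) (u : ℝ) :
    v * gaussianPDFReal s v u ≤ (|u - s| + 4 * √v) * ∫ x in Ioi u, gaussianPDFReal s v x := by
  set σ := √(v : ℝ)
  have hσ : 0 < σ := Real.sqrt_pos.mpr (by positivity)
  have hσv : σ ^ 2 = v := Real.sq_sqrt v.2
  have hQ : 0 ≤ ∫ x in Ioi u, gaussianPDFReal s v x :=
    setIntegral_nonneg measurableSet_Ioi fun x _ => gaussianPDFReal_nonneg s v x
  by_cases hu : σ ≤ u - s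
  · have hx : 0 < u - s := hσ.trans_le hu
    have hgordon := mul_gaussianPDFReal_le_setIntegral_Ioi hv hu
    rw [div_mul_eq_mul_div, div_le_iff₀ (by positivity)] at hgordon
    rw [abs_of_pos hx]
    have hvx : (v : ℝ) ≤ 4 * σ * (u - s) := by nlinarith
    refine le_of_mul_le_mul_left ?_ hx
    nlinarith [mul_le_mul_of_nonneg_right hvx hQ]
  · rw [not_le] at hu
    have hpeak : gaussianPDFReal s v u ≤ (√(2 * π * v))⁻¹ := by
      rw [gaussianPDFReal]
      refine mul_le_of_le_one_right (by positivity) (exp_le_one_iff.mpr ?_)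
      exact div_nonpos_of_nonpos_of_nonneg (by nlinarith) (by positivity)
    have hone_sd : gaussianPDFReal s v (s + σ) = (√(2 * π * v))⁻¹ * exp (-(1 / 2)) := by
      rw [gaussianPDFReal, add_sub_cancel_left, hσv]
      field_simp
    have hexp : 1 / 2 ≤ exp (-(1 / 2)) := by linarith [add_one_le_exp (-(1 / 2) : ℝ)]
    have hgordon :=
      mul_gaussianPDFReal_le_setIntegral_Ioi (u := s + σ) hv (add_sub_cancel_left s σ).ge
    rw [add_sub_cancel_left, ← hσv, hone_sd] at hgordon
    have hmono : ∫ x in Ioi (s + σ), gaussianPDFReal s v x ≤ ∫ x in Ioi u, gaussianPDFReal s v x :=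
      setIntegral_mono_set (integrable_gaussianPDFReal s v).integrableOn
        (ae_of_all _ fun x => gaussianPDFReal_nonneg s v x)
        (Ioi_subset_Ioi (by linarith)).eventuallyLE
    calc (v : ℝ) * gaussianPDFReal s v u ≤ σ ^ 2 * (√(2 * π * v))⁻¹ := by
          rw [hσv]; gcongr
      _ ≤ 4 * σ * (σ ^ 2 * σ / (σ ^ 2 + σ ^ 2) * ((√(2 * π * v))⁻¹ * exp (-(1 / 2)))) := by
          field_simp
          nlinarith [sq_nonneg σ]
      _ ≤ 4 * σ * ∫ x in Ioi u, gaussianPDFReal s v x := by gcongr; exact hgordon.trans hmono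
      _ ≤ (|u - s| + 4 * σ) * ∫ x in Ioi u, gaussianPDFReal s v x := by
          gcongr; exact le_add_of_nonneg_left (abs_nonneg _)

lemma lintegral_ofReal_sub_gaussianReal {s : ℝ} {v : ℝ≥0} (hv : v ≠ 0) (u : ℝ) :
    ∫⁻ z, ENNReal.ofReal (z - u) ∂gaussianReal s v
      = ENNReal.ofReal
          (v * gaussianPDFReal s v u + (s - u) * ∫ x in Ioi u, gaussianPDFReal s v x) := by
  set f : ℝ → ℝ := (Ioi u).indicator fun x => (x - u) * gaussianPDFReal s v x
  have hf_int : Integrable f :=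
    (integrable_sub_mul_gaussianPDFReal s v u).integrableOn.integrable_indicator measurableSet_Ioi
  have hf_nonneg : 0 ≤ᵐ[volume] f := ae_of_all _ <| indicator_nonneg fun x hx =>
    mul_nonneg (sub_nonneg.mpr (le_of_lt hx)) (gaussianPDFReal_nonneg s v x)
  calc ∫⁻ z, ENNReal.ofReal (z - u) ∂gaussianReal s v = ∫⁻ x, ENNReal.ofReal (f x) := by
        rw [gaussianReal_of_var_ne_zero s hv,
          lintegral_withDensity_eq_lintegral_mul _ (measurable_gaussianPDF s v) (by fun_prop)]
        refine lintegral_congr fun x => ?_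
        by_cases hx : x ∈ Ioi u
        · rw [show f x = _ from indicator_of_mem hx _, Pi.mul_apply, gaussianPDF, mul_comm (x - u),
            ENNReal.ofReal_mul (gaussianPDFReal_nonneg s v x)]
        · rw [show f x = 0 from indicator_of_notMem hx _, ENNReal.ofReal_zero, Pi.mul_apply,
            ENNReal.ofReal_of_nonpos (by simpa using hx), mul_zero]
    _ = ENNReal.ofReal (∫ x in Ioi u, (x - u) * gaussianPDFReal s v x) := by
        rw [← ofReal_integral_eq_lintegral_ofReal hf_int hf_nonneg,
          integral_indicator measurableSet_Ioi]
    _ = _ := by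
        congr 1
        simp_rw [show ∀ x, (x - u) * gaussianPDFReal s v x =
            (x - s) * gaussianPDFReal s v x + (s - u) * gaussianPDFReal s v x from fun x => by ring]
        rw [integral_add (integrable_sub_mul_gaussianPDFReal s v s).integrableOn
          ((integrable_gaussianPDFReal s v).integrableOn.const_mul _), integral_const_mul,
          setIntegral_Ioi_sub_mul_gaussianPDFReal]

lemma lintegral_ofReal_sub_le_mul_gaussianReal_Ici {s : ℝ} {v : ℝ≥0} (hv : v ≠ 0) (hs : 0 ≤ s)
    {u : ℝ} (hu : 0 ≤ u) :
    ∫⁻ z, ENNReal.ofReal (z - u) ∂gaussianReal s v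
      ≤ ENNReal.ofReal (2 * s + 4 * √v) * gaussianReal s v (Ici u) := by
  rw [lintegral_ofReal_sub_gaussianReal hv, gaussianReal_apply_eq_integral s hv,
    integral_Ici_eq_integral_Ioi, ← ENNReal.ofReal_mul (by positivity)]
  refine ENNReal.ofReal_le_ofReal ?_
  have hQ : 0 ≤ ∫ x in Ioi u, gaussianPDFReal s v x :=
    setIntegral_nonneg measurableSet_Ioi fun x _ => gaussianPDFReal_nonneg s v x
  have habs : |u - s| + (s - u) ≤ 2 * s := by
    rcases abs_cases (u - s) with ⟨h, _⟩ | ⟨h, _⟩ <;> linarith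
  nlinarith [mul_gaussianPDFReal_le_mul_setIntegral_Ioi (s := s) hv u,
    mul_le_mul_of_nonneg_right habs hQ]

variable {Ω : Type*} {m mΩ : MeasurableSpace Ω} {P : Measure Ω}

lemma setLIntegral_ofReal_add_le_of_indepFun [IsFiniteMeasure P] {X Y : Ω → ℝ}
    (hX : Measurable X) (hY : Measurable Y) (hXY : IndepFun X Y P) {K : ℝ≥0∞}
    (hK : ∀ u, 0 ≤ u → ∫⁻ y, ENNReal.ofReal (y - u) ∂(P.map Y) ≤ K * P.map Y (Ici u)) :
    ∫⁻ ω in {ω | X ω ≤ 0}, ENNReal.ofReal (X ω + Y ω) ∂P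
      ≤ K * P {ω | X ω ≤ 0 ∧ 0 ≤ X ω + Y ω} := by
  set μ₀ := (P.map X).restrict (Iic 0)
  have hXYm : Measurable fun ω => (X ω, Y ω) := hX.prodMk hY
  have hB : MeasurableSet (Iic (0 : ℝ) ×ˢ (univ : Set ℝ)) := measurableSet_Iic.prod .univ
  have hC : MeasurableSet {p : ℝ × ℝ | 0 ≤ p.1 + p.2} :=
    measurableSet_le measurable_const (by fun_prop)
  have hprod : (P.map fun ω => (X ω, Y ω)).restrict (Iic 0 ×ˢ univ) = μ₀.prod (P.map Y) := by
    rw [hXY.map_prod_eq_prod_map_map hX.aemeasurable hY.aemeasurable, ← Measure.prod_restrict,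
      Measure.restrict_univ]
  have hLHS : ∫⁻ ω in {ω | X ω ≤ 0}, ENNReal.ofReal (X ω + Y ω) ∂P
      = ∫⁻ x, ∫⁻ y, ENNReal.ofReal (x + y) ∂(P.map Y) ∂μ₀ := by
    calc ∫⁻ ω in {ω | X ω ≤ 0}, ENNReal.ofReal (X ω + Y ω) ∂P
        = ∫⁻ ω in (fun ω => (X ω, Y ω)) ⁻¹' (Iic 0 ×ˢ univ),
            ENNReal.ofReal ((X ω, Y ω).1 + (X ω, Y ω).2) ∂P := by
          congr 2; ext ω; simp
      _ = ∫⁻ p in Iic 0 ×ˢ univ, ENNReal.ofReal (p.1 + p.2) ∂(P.map fun ω => (X ω, Y ω)) :=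
          (setLIntegral_map hB (f := fun p : ℝ × ℝ => ENNReal.ofReal (p.1 + p.2)) (by fun_prop)
            hXYm).symm
      _ = ∫⁻ p, ENNReal.ofReal (p.1 + p.2) ∂(μ₀.prod (P.map Y)) := by rw [hprod]
      _ = _ := lintegral_prod _ (by fun_prop)
  have hsection (x : ℝ) : Prod.mk x ⁻¹' {p : ℝ × ℝ | 0 ≤ p.1 + p.2} = Ici (-x) := by
    ext y; simp [neg_le_iff_add_nonneg']
  have hRHS : P {ω | X ω ≤ 0 ∧ 0 ≤ X ω + Y ω}
      = ∫⁻ x, P.map Y (Prod.mk x ⁻¹' {p : ℝ × ℝ | 0 ≤ p.1 + p.2}) ∂μ₀ := by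
    calc P {ω | X ω ≤ 0 ∧ 0 ≤ X ω + Y ω}
        = P.map (fun ω => (X ω, Y ω)) ({p | 0 ≤ p.1 + p.2} ∩ Iic 0 ×ˢ univ) := by
          rw [Measure.map_apply hXYm (hC.inter hB)]
          congr 1; ext ω; simp [and_comm]
      _ = μ₀.prod (P.map Y) {p | 0 ≤ p.1 + p.2} := by rw [← hprod, Measure.restrict_apply hC]
      _ = _ := Measure.prod_apply hC
  calc ∫⁻ ω in {ω | X ω ≤ 0}, ENNReal.ofReal (X ω + Y ω) ∂P
      = ∫⁻ x, ∫⁻ y, ENNReal.ofReal (y - -x) ∂(P.map Y) ∂μ₀ := by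
        simp_rw [hLHS, sub_neg_eq_add, add_comm]
    _ ≤ ∫⁻ x, K * P.map Y (Prod.mk x ⁻¹' {p : ℝ × ℝ | 0 ≤ p.1 + p.2}) ∂μ₀ :=
        setLIntegral_mono' measurableSet_Iic fun x hx => by
          rw [hsection]; exact hK (-x) (neg_nonneg.mpr hx)
    _ = K * P {ω | X ω ≤ 0 ∧ 0 ≤ X ω + Y ω} := by
        rw [lintegral_const_mul K (measurable_measure_prodMk_left hC), hRHS]

lemma setLIntegral_ofReal_add_le_of_indep [IsFiniteMeasure P]
    (hm : m ≤ mΩ) {A : Set Ω} (hA : MeasurableSet[m] A) {F : Ω → ℝ} (hF : Measurable[m] F)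
    (hFA : ∀ ω ∈ A, F ω ≤ 0) {Y : Ω → ℝ} (hY : Measurable Y)
    (hind : Indep m (MeasurableSpace.comap Y inferInstance) P) {K : ℝ≥0∞}
    (hK : ∀ u, 0 ≤ u → ∫⁻ y, ENNReal.ofReal (y - u) ∂(P.map Y) ≤ K * P.map Y (Ici u)) :
    ∫⁻ ω in A, ENNReal.ofReal (F ω + Y ω) ∂P ≤ K * P (A ∩ {ω | 0 ≤ F ω + Y ω}) := by
  classical
  -- Outside `A` we replace `F` by `1`, so that `A` becomes the sublevel set `{X ≤ 0}`.
  set X : Ω → ℝ := A.piecewise F 1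
  have hXm : Measurable[m] X := hF.piecewise hA measurable_const
  have hXY : IndepFun X Y P :=
    (IndepFun_iff_Indep X Y P).2 (indep_of_indep_of_le_left hind hXm.comap_le)
  have hXA : {ω | X ω ≤ 0} = A := by
    ext ω; by_cases hω : ω ∈ A <;> simp [X, hω, hFA]
  calc ∫⁻ ω in A, ENNReal.ofReal (F ω + Y ω) ∂P
      = ∫⁻ ω in {ω | X ω ≤ 0}, ENNReal.ofReal (X ω + Y ω) ∂P := by
        rw [hXA]
        exact setLIntegral_congr_fun (hm _ hA) fun ω hω => by simp [X, hω]
    _ ≤ K * P {ω | X ω ≤ 0 ∧ 0 ≤ X ω + Y ω} :=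
        setLIntegral_ofReal_add_le_of_indepFun (hXm.mono hm le_rfl) hY hXY hK
    _ = K * P (A ∩ {ω | 0 ≤ F ω + Y ω}) := by
        congr 2; ext ω; by_cases hω : ω ∈ A <;> simp [X, hω, hFA]

lemma ofReal_sub_sInf_le_tsum {x : ℕ → ℝ} {l : ℝ} (h0 : x 0 ≤ l) :
    ENNReal.ofReal (x (sInf {t | 1 ≤ t ∧ l ≤ x t}) - l) ≤
      ∑' n, {n | ∀ j ∈ Finset.Icc 1 n, x j < l}.indicator
        (fun n => ENNReal.ofReal (x (n + 1) - l)) n := by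
  rcases Set.eq_empty_or_nonempty {t | 1 ≤ t ∧ l ≤ x t} with hT | hT
  · rw [hT, Nat.sInf_empty, ENNReal.ofReal_of_nonpos (by linarith)]
    exact zero_le
  obtain ⟨hpos, -⟩ := Nat.sInf_mem hT
  obtain ⟨n, hn⟩ : ∃ n, sInf {t | 1 ≤ t ∧ l ≤ x t} = n + 1 :=
    ⟨sInf {t | 1 ≤ t ∧ l ≤ x t} - 1, (Nat.sub_add_cancel hpos).symm⟩
  have hbefore : ∀ j ∈ Finset.Icc 1 n, x j < l := by
    intro j hj
    rw [Finset.mem_Icc] at hj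
    by_contra! hle
    exact Nat.notMem_of_lt_sInf (s := {t | 1 ≤ t ∧ l ≤ x t}) (by omega) ⟨hj.1, hle⟩
  rw [hn]
  exact (indicator_of_mem (s := {n | ∀ j ∈ Finset.Icc 1 n, x j < l}) hbefore _).symm.le.trans
    (ENNReal.le_tsum n)

lemma indep_iSup_comap_Iic_comap_succ {β : Type*} [MeasurableSpace β] {Z : ℕ → Ω → β}
    (hZm : ∀ i, Measurable (Z i)) (hindep : iIndepFun Z P) (n : ℕ) :
    Indep (⨆ i ∈ Iic n, MeasurableSpace.comap (Z i) inferInstance)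
      (MeasurableSpace.comap (Z (n + 1)) inferInstance) P := by
  simpa using indep_iSup_of_disjoint (fun i => (hZm i).comap_le) hindep.iIndep
    (S := Iic n) (T := {n + 1}) (by simp)

lemma setLIntegral_ofReal_succ_sub_le [IsFiniteMeasure P] {Z : ℕ → Ω → ℝ}
    (hZm : ∀ i, Measurable (Z i)) (hindep : iIndepFun Z P)
    {S : ℕ → Ω → ℝ} (hS : ∀ t ω, S t ω = ∑ i ∈ Finset.Icc 1 t, Z i ω) {l : ℝ} (hl : 0 ≤ l)
    (n : ℕ) {K : ℝ≥0∞}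
    (hK : ∀ u, 0 ≤ u →
      ∫⁻ z, ENNReal.ofReal (z - u) ∂(P.map (Z (n + 1))) ≤ K * P.map (Z (n + 1)) (Ici u)) :
    ∫⁻ ω in {ω | ∀ j ∈ Finset.Icc 1 n, S j ω < l}, ENNReal.ofReal (S (n + 1) ω - l) ∂P
      ≤ K * P ({ω | ∀ j ∈ Finset.Icc 1 n, S j ω < l} ∩ {ω | l ≤ S (n + 1) ω}) := by
  set past := ⨆ i ∈ Iic n, MeasurableSpace.comap (Z i) inferInstance
  have hS_meas (j : ℕ) (hj : j ≤ n) : Measurable[past] (S j) := by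
    rw [show S j = fun ω => ∑ i ∈ Finset.Icc 1 j, Z i ω from funext (hS j)]
    refine Finset.measurable_fun_sum _ fun i hi => (comap_measurable (Z i)).mono ?_ le_rfl
    exact le_iSup₂ (f := fun i (_ : i ∈ Iic n) => MeasurableSpace.comap (Z i) inferInstance) i
      (mem_Iic.mpr ((Finset.mem_Icc.mp hi).2.trans hj))
  have hA_meas : MeasurableSet[past] {ω | ∀ j ∈ Finset.Icc 1 n, S j ω < l} := by
    simp only [ofPred_forall]
    exact .biInter (Finset.countable_toSet _) fun j hj =>
      measurableSet_lt (hS_meas j (Finset.mem_Icc.mp hj).2) measurable_const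
  have hgap (ω : Ω) (hω : ∀ j ∈ Finset.Icc 1 n, S j ω < l) : S n ω - l ≤ 0 := by
    rcases Nat.eq_zero_or_pos n with rfl | hn
    · simp [hS, hl]
    · exact sub_nonpos.mpr (hω n (Finset.mem_Icc.mpr ⟨hn, le_rfl⟩)).le
  have hS_succ (ω : Ω) : S (n + 1) ω = S n ω - l + Z (n + 1) ω + l := by
    rw [hS, hS, Finset.sum_Icc_succ_top (Nat.le_add_left 1 n)]
    ring
  have h := setLIntegral_ofReal_add_le_of_indep (iSup₂_le fun i _ => (hZm i).comap_le) hA_meas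
    ((hS_meas n le_rfl).sub_const l) hgap (hZm (n + 1))
    (indep_iSup_comap_Iic_comap_succ hZm hindep n) hK
  simp_rw [hS_succ, add_sub_cancel_right, le_add_iff_nonneg_left]
  exact h

theorem lintegral_ofReal_overshoot_le_of_measurable [IsProbabilityMeasure P] {Z : ℕ → Ω → ℝ}
    (hZm : ∀ i, Measurable (Z i)) (hindep : iIndepFun Z P) {ν : Measure ℝ}
    (hZ : ∀ i, P.map (Z i) = ν) {K : ℝ≥0∞}
    (hK : ∀ u, 0 ≤ u → ∫⁻ z, ENNReal.ofReal (z - u) ∂ν ≤ K * ν (Ici u))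
    {S : ℕ → Ω → ℝ} (hS : ∀ t ω, S t ω = ∑ i ∈ Finset.Icc 1 t, Z i ω)
    {μl : ℝ → Ω → ℕ} (hμl : ∀ l ω, μl l ω = sInf {t : ℕ | 1 ≤ t ∧ l ≤ S t ω})
    {l : ℝ} (hl : 0 ≤ l) :
    ∫⁻ ω, ENNReal.ofReal (S (μl l ω) ω - l) ∂P ≤ K := by
  set A : ℕ → Set Ω := fun n => {ω | ∀ j ∈ Finset.Icc 1 n, S j ω < l}
  have hS_meas (n : ℕ) : Measurable (S n) := by
    rw [show S n = fun ω => ∑ i ∈ Finset.Icc 1 n, Z i ω from funext (hS n)]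
    exact Finset.measurable_fun_sum _ fun i _ => hZm i
  have hA_meas (n : ℕ) : MeasurableSet (A n) := by
    simp only [A, ofPred_forall]
    exact .biInter (Finset.countable_toSet _) fun j _ =>
      measurableSet_lt (hS_meas j) measurable_const
  have hdisj : Pairwise (Disjoint on fun n => A n ∩ {ω | l ≤ S (n + 1) ω}) := by
    have hlt {n n' : ℕ} (h : n < n') :
        Disjoint (A n ∩ {ω | l ≤ S (n + 1) ω}) (A n' ∩ {ω | l ≤ S (n' + 1) ω}) :=
      Set.disjoint_left.mpr fun ω hω hω' =>
        (hω'.1 (n + 1) (Finset.mem_Icc.mpr ⟨Nat.le_add_left 1 n, h⟩)).not_ge hω.2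
    intro n n' hne
    rcases Nat.lt_or_gt_of_ne hne with h | h
    · exact hlt h
    · exact (hlt h).symm
  calc ∫⁻ ω, ENNReal.ofReal (S (μl l ω) ω - l) ∂P
      ≤ ∫⁻ ω, ∑' n, (A n).indicator (fun ω => ENNReal.ofReal (S (n + 1) ω - l)) ω ∂P := by
        refine lintegral_mono fun ω => ?_
        rw [hμl]
        exact ofReal_sub_sInf_le_tsum (x := fun t => S t ω) (by simp [hS, hl])
    _ = ∑' n, ∫⁻ ω in A n, ENNReal.ofReal (S (n + 1) ω - l) ∂P := by
        rw [lintegral_tsum fun n =>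
          (((hS_meas (n + 1)).sub_const l).ennreal_ofReal.indicator (hA_meas n)).aemeasurable]
        simp_rw [lintegral_indicator (hA_meas _)]
    _ ≤ ∑' n, K * P (A n ∩ {ω | l ≤ S (n + 1) ω}) := ENNReal.tsum_le_tsum fun n =>
        setLIntegral_ofReal_succ_sub_le hZm hindep hS hl n (hZ (n + 1) ▸ hK)
    _ = K * P (⋃ n, A n ∩ {ω | l ≤ S (n + 1) ω}) := by
        rw [ENNReal.tsum_mul_left, measure_iUnion hdisj fun n =>
          (hA_meas n).inter (measurableSet_le measurable_const (hS_meas (n + 1)))]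
    _ ≤ K := mul_le_of_le_one_right' prob_le_one

theorem lintegral_ofReal_overshoot_le [IsProbabilityMeasure P] {Z : ℕ → Ω → ℝ}
    (hindep : iIndepFun Z P) {ν : Measure ℝ} [NeZero ν] (hZ : ∀ i, P.map (Z i) = ν) {K : ℝ≥0∞}
    (hK : ∀ u, 0 ≤ u → ∫⁻ z, ENNReal.ofReal (z - u) ∂ν ≤ K * ν (Ici u))
    {S : ℕ → Ω → ℝ} (hS : ∀ t ω, S t ω = ∑ i ∈ Finset.Icc 1 t, Z i ω)
    {μl : ℝ → Ω → ℕ} (hμl : ∀ l ω, μl l ω = sInf {t : ℕ | 1 ≤ t ∧ l ≤ S t ω})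
    {l : ℝ} (hl : 0 ≤ l) :
    ∫⁻ ω, ENNReal.ofReal (S (μl l ω) ω - l) ∂P ≤ K := by
  have hZae (i : ℕ) : AEMeasurable (Z i) P :=
    AEMeasurable.of_map_ne_zero (by rw [hZ i]; exact NeZero.ne ν)
  set Z' : ℕ → Ω → ℝ := fun i => (hZae i).mk (Z i)
  have h := lintegral_ofReal_overshoot_le_of_measurable (fun i => (hZae i).measurable_mk)
    (hindep.congr fun i => (hZae i).ae_eq_mk)
    (fun i => by rw [← Measure.map_congr (hZae i).ae_eq_mk, hZ i]) hK
    (S := fun t ω => ∑ i ∈ Finset.Icc 1 t, Z' i ω) (fun _ _ => rfl)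
    (μl := fun l ω => sInf {t : ℕ | 1 ≤ t ∧ l ≤ ∑ i ∈ Finset.Icc 1 t, Z' i ω}) (fun _ _ => rfl) hl
  refine le_of_eq_of_le (lintegral_congr_ae ?_) h
  filter_upwards [ae_all_iff.mpr fun i => (hZae i).ae_eq_mk] with ω hω
  have hS' (t : ℕ) : S t ω = ∑ i ∈ Finset.Icc 1 t, Z' i ω := by simp only [hS, hω, Z']
  simp only [hμl, hS']

end ProbabilityTheory

/-- **Corollary (Gaussian overshoot bound).** Let `Z₁, Z₂, …` be i.i.d. Gaussian random
variables with mean `s ≥ 0` and variance `σ² > 0`.  With `S_t = Z₁ + ⋯ + Z_t`,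
`μ_l = inf{t ≥ 1 : S_t ≥ l}` and overshoot `R_{μ_l} = S_{μ_l} - l`, one has
`sup_{l ≥ 0} E(R_{μ_l}) ≤ 2s + 4σ`. -/
theorem gaussian_overshoot_bound
    {Ω : Type*} [MeasurableSpace Ω] (P : Measure Ω) [IsProbabilityMeasure P]
    (s σ : ℝ) (hs : 0 ≤ s) (hσ : 0 < σ)
    (Z : ℕ → Ω → ℝ)
    (hindep : iIndepFun Z P)
    (hZ : ∀ i, Measure.map (Z i) P = gaussianReal s ((σ ^ 2).toNNReal))
    (S : ℕ → Ω → ℝ) (hS : ∀ t ω, S t ω = ∑ i ∈ Finset.Icc 1 t, Z i ω)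
    (μl : ℝ → Ω → ℕ) (hμl : ∀ l ω, μl l ω = sInf {t : ℕ | 1 ≤ t ∧ l ≤ S t ω}) :
    ∀ l : ℝ, 0 ≤ l →
      ∫⁻ ω, ENNReal.ofReal (S (μl l ω) ω - l) ∂P ≤ ENNReal.ofReal (2 * s + 4 * σ) := by
  intro l hl
  have hv : (σ ^ 2).toNNReal ≠ 0 := by simpa using hσ.ne'
  have hsqrt : √((σ ^ 2).toNNReal : ℝ) = σ := by
    rw [Real.coe_toNNReal _ (sq_nonneg σ), Real.sqrt_sq hσ.le]
  refine lintegral_ofReal_overshoot_le hindep hZ (fun u hu => ?_) hS hμl hl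
  simpa only [hsqrt] using lintegral_ofReal_sub_le_mul_gaussianReal_Ici hv hs hu
end

section
/- For all l > 0 and s > 0, the overshoot of the drift-s Gaussian random walk X over level l satisfies E(X_{τ_l} − l) ≤ 2s + 4. -/
open MeasureTheory ProbabilityTheory Real Filter
open scoped ENNReal NNReal

/-!
Split the overshoot according to the first crossing time `n + 1`. On that event the path
`X 0, …, X n` stays below `l` and is independent of `V (n + 1)`, and the overshoot is
`(Z - d)⁺` with `Z = V (n + 1)` standard Gaussian and `d = l - s - X n > -s`. For such `d`,
`E (Z - d)⁺ = φ d - d Q d ≤ (2 s + 4) Q d = (2 s + 4) P(Z ≥ d)`, where `Q` is the standard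
Gaussian tail; this follows from Mills' inequality `d / (d ^ 2 + 1) φ d ≤ Q d`. Hence each
crossing time contributes at most `2 s + 4` times its probability, and these probabilities sum
to at most `1`.
-/

open Set

section StdGaussian

local notation "φ" => gaussianPDFReal 0 1

lemma gaussianPDFReal_zero_one_apply (x : ℝ) : φ x = (√(2 * π))⁻¹ * rexp (-x ^ 2 / 2) := by
  simp [gaussianPDFReal]

lemma hasDerivAt_gaussianPDFReal_zero_one (x : ℝ) : HasDerivAt φ (-x * φ x) x := by
  have h : HasDerivAt (fun x : ℝ => -x ^ 2 / 2) (-x) x := by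
    simpa using ((hasDerivAt_pow 2 x).neg.div_const 2).congr_deriv (by ring)
  rw [funext gaussianPDFReal_zero_one_apply]
  exact (h.exp.const_mul _).congr_deriv (by ring)

lemma gaussianPDFReal_zero_one_le (x : ℝ) : φ x ≤ φ 0 := by
  simp only [gaussianPDFReal_zero_one_apply]
  gcongr ?_ * rexp ?_
  linarith [sq_nonneg x]

lemma gaussianPDFReal_zero_one_zero_le_two_mul : φ 0 ≤ 2 * φ 1 := by
  have h : rexp (1 / 2) ≤ 2 := by
    have h1 : rexp (1 / 2) * rexp (1 / 2) = rexp 1 := by rw [← Real.exp_add]; norm_num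
    nlinarith [Real.exp_one_lt_d9, Real.exp_pos (1 / 2)]
  have h' : rexp (-0 ^ 2 / 2) = rexp (1 / 2) * rexp (-1 ^ 2 / 2) := by
    rw [← Real.exp_add]; norm_num
  simp only [gaussianPDFReal_zero_one_apply, h']
  have : 0 < (√(2 * π))⁻¹ * rexp (-1 ^ 2 / 2) := by positivity
  nlinarith

lemma tendsto_gaussianPDFReal_zero_one_atTop : Tendsto φ atTop (nhds 0) := by
  have h : Tendsto (fun x : ℝ => -x ^ 2 / 2) atTop atBot :=
    (tendsto_neg_atBot_iff.2 (tendsto_pow_atTop two_ne_zero)).atBot_div_const two_pos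
  simpa [funext gaussianPDFReal_zero_one_apply] using
    (tendsto_exp_atBot.comp h).const_mul (√(2 * π))⁻¹

lemma integrable_mul_gaussianPDFReal_zero_one : Integrable fun x => x * φ x := by
  convert (integrable_mul_exp_neg_mul_sq (b := 1 / 2) one_half_pos).const_mul (√(2 * π))⁻¹
    using 2 with x
  rw [gaussianPDFReal_zero_one_apply]; ring_nf

lemma integral_Ioi_mul_gaussianPDFReal_zero_one (d : ℝ) : ∫ x in Ioi d, x * φ x = φ d := by
  have h := integral_Ioi_of_hasDerivAt_of_tendsto' (f := fun x => -φ x) (a := d)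
    (fun x _ => (hasDerivAt_gaussianPDFReal_zero_one x).neg.congr_deriv (by ring))
    integrable_mul_gaussianPDFReal_zero_one.integrableOn
    (by simpa using tendsto_gaussianPDFReal_zero_one_atTop.neg)
  simpa using h

noncomputable def stdGaussianTail (d : ℝ) : ℝ := ∫ x in Ioi d, φ x

lemma stdGaussianTail_antitone : Antitone stdGaussianTail := fun _ _ hde =>
  setIntegral_mono_set (integrable_gaussianPDFReal 0 1).integrableOn
    (ae_of_all _ (gaussianPDFReal_nonneg 0 1)) (Ioi_subset_Ioi hde).eventuallyLE

lemma integral_Ioi_sub_mul_gaussianPDFReal_zero_one (d : ℝ) :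
    ∫ x in Ioi d, (x - d) * φ x = φ d - d * stdGaussianTail d := by
  simp_rw [sub_mul]
  rw [integral_sub integrable_mul_gaussianPDFReal_zero_one.integrableOn
    ((integrable_gaussianPDFReal 0 1).const_mul d).integrableOn,
    integral_Ioi_mul_gaussianPDFReal_zero_one, integral_const_mul, stdGaussianTail]

lemma hasDerivAt_div_sq_add_one_mul_gaussianPDFReal (x : ℝ) :
    HasDerivAt (fun y => y / (y ^ 2 + 1) * φ y) ((2 / (x ^ 2 + 1) ^ 2 - 1) * φ x) x := by
  have hq : HasDerivAt (fun y : ℝ => y ^ 2 + 1) (2 * x) x := by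
    simpa using (hasDerivAt_pow 2 x).add_const 1
  refine (((hasDerivAt_id' x).div hq (by positivity)).mul
    (hasDerivAt_gaussianPDFReal_zero_one x)).congr_deriv ?_
  simp only [Pi.div_apply]
  field_simp
  ring

/-- Mills' inequality: the derivative of `x ↦ x / (x ^ 2 + 1) * φ x` is at least `-φ x`. -/
lemma div_sq_add_one_mul_gaussianPDFReal_le_stdGaussianTail (d : ℝ) :
    d / (d ^ 2 + 1) * φ d ≤ stdGaussianTail d := by
  have hφ := integrable_gaussianPDFReal 0 1
  have hbound : ∀ x : ℝ, ‖(2 / (x ^ 2 + 1) ^ 2 - 1) * φ x‖ ≤ ‖φ x‖ := fun x => by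
    have h2 : 2 / (x ^ 2 + 1) ^ 2 ≤ 2 := div_le_self zero_le_two (one_le_pow₀ (by nlinarith))
    have h0 : 0 ≤ 2 / (x ^ 2 + 1) ^ 2 := by positivity
    rw [norm_mul]
    exact mul_le_of_le_one_left (norm_nonneg _) (abs_le.2 ⟨by linarith, by linarith⟩)
  have hint : Integrable fun x => (2 / (x ^ 2 + 1) ^ 2 - 1) * φ x :=
    hφ.mono (by fun_prop) (ae_of_all _ hbound)
  have hlim : Tendsto (fun x => x / (x ^ 2 + 1) * φ x) atTop (nhds 0) := by
    refine squeeze_zero_norm (fun x => ?_) tendsto_gaussianPDFReal_zero_one_atTop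
    have h : |x / (x ^ 2 + 1)| ≤ 1 := by
      rw [abs_div, abs_of_pos (by positivity : (0 : ℝ) < x ^ 2 + 1), div_le_one (by positivity)]
      nlinarith [abs_nonneg x, sq_abs x, sq_nonneg (|x| - 1)]
    rw [norm_mul, Real.norm_of_nonneg (gaussianPDFReal_nonneg 0 1 x)]
    exact mul_le_of_le_one_left (gaussianPDFReal_nonneg 0 1 x) h
  have hnn : 0 ≤ ∫ x in Ioi d, (φ x + (2 / (x ^ 2 + 1) ^ 2 - 1) * φ x) :=
    setIntegral_nonneg measurableSet_Ioi fun x _ => by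
      rw [← one_add_mul, add_sub_cancel]
      exact mul_nonneg (by positivity) (gaussianPDFReal_nonneg 0 1 x)
  rw [integral_add hφ.integrableOn hint.integrableOn, integral_Ioi_of_hasDerivAt_of_tendsto'
    (fun x _ => hasDerivAt_div_sq_add_one_mul_gaussianPDFReal x) hint.integrableOn hlim] at hnn
  rw [stdGaussianTail]
  linarith

lemma gaussianPDFReal_le_mul_stdGaussianTail {c d : ℝ} (hc : 1 ≤ c) (hcd : 4 ≤ c + d) :
    φ d ≤ (c + d) * stdGaussianTail d := by
  -- For `d < 1`: `φ d ≤ φ 0 ≤ 2 φ 1`, and Mills at `1` gives `φ 1 ≤ 2 * stdGaussianTail 1`.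
  rcases le_or_gt 1 d with hd | hd
  · have hmills := mul_le_mul_of_nonneg_left
      (div_sq_add_one_mul_gaussianPDFReal_le_stdGaussianTail d) (by linarith : 0 ≤ c + d)
    have hratio : 1 ≤ (c + d) * (d / (d ^ 2 + 1)) := by
      rw [mul_div_assoc', le_div_iff₀ (by positivity)]
      nlinarith
    nlinarith [gaussianPDFReal_nonneg 0 1 d]
  · have htail : φ 1 / 2 ≤ stdGaussianTail d := by
      have := div_sq_add_one_mul_gaussianPDFReal_le_stdGaussianTail 1
      norm_num at this
      linarith [stdGaussianTail_antitone hd.le]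
    nlinarith [gaussianPDFReal_zero_one_le d, gaussianPDFReal_zero_one_zero_le_two_mul,
      gaussianPDFReal_nonneg 0 1 1]

lemma lintegral_ofReal_sub_le_mul_gaussianReal_Ici {c d : ℝ} (hc : 1 ≤ c) (hcd : 4 ≤ c + d) :
    ∫⁻ z, ENNReal.ofReal (z - d) ∂gaussianReal 0 1
      ≤ ENNReal.ofReal c * gaussianReal 0 1 (Ici d) := by
  have hpos : ∀ z, ENNReal.ofReal (z - d) * ENNReal.ofReal (φ z)
      = ENNReal.ofReal ((Ioi d).indicator (fun x => (x - d) * φ x) z) := fun z => by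
    rcases le_or_gt z d with h | h
    · rw [indicator_of_notMem (notMem_Ioi.2 h), ENNReal.ofReal_eq_zero.2 (by linarith), zero_mul,
        ENNReal.ofReal_zero]
    · rw [indicator_of_mem (mem_Ioi.2 h), ENNReal.ofReal_mul (by linarith)]
  have hint : Integrable ((Ioi d).indicator fun x => (x - d) * φ x) :=
    ((integrable_mul_gaussianPDFReal_zero_one.sub
      ((integrable_gaussianPDFReal 0 1).const_mul d)).congr
      (ae_of_all _ fun x => by simp only [Pi.sub_apply]; ring)).indicator measurableSet_Ioi
  have hnn : 0 ≤ᵐ[volume] (Ioi d).indicator fun x => (x - d) * φ x :=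
    ae_of_all _ (indicator_nonneg fun x hx =>
      mul_nonneg (by linarith [mem_Ioi.1 hx]) (gaussianPDFReal_nonneg 0 1 x))
  calc ∫⁻ z, ENNReal.ofReal (z - d) ∂gaussianReal 0 1
      = ENNReal.ofReal (φ d - d * stdGaussianTail d) := by
        rw [gaussianReal_of_var_ne_zero 0 one_ne_zero,
          lintegral_withDensity_eq_lintegral_mul _ (measurable_gaussianPDF 0 1) (by fun_prop)]
        simp only [Pi.mul_apply, gaussianPDF, mul_comm (ENNReal.ofReal (gaussianPDFReal 0 1 _)),
          hpos]
        rw [← ofReal_integral_eq_lintegral_ofReal hint hnn, integral_indicator measurableSet_Ioi,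
          integral_Ioi_sub_mul_gaussianPDFReal_zero_one]
    _ ≤ ENNReal.ofReal (c * stdGaussianTail d) := by
        gcongr
        linarith [gaussianPDFReal_le_mul_stdGaussianTail hc hcd]
    _ = ENNReal.ofReal c * gaussianReal 0 1 (Ici d) := by
        rw [ENNReal.ofReal_mul (by linarith), gaussianReal_apply_eq_integral 0 one_ne_zero,
          integral_Ici_eq_integral_Ioi, stdGaussianTail]

end StdGaussian

lemma lintegral_le_mul_measure_of_indepFun {Ω E β : Type*} [MeasurableSpace Ω]
    [MeasurableSpace E] [MeasurableSpace β] {P : Measure Ω} [IsFiniteMeasure P]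
    {W : Ω → E} {Z : Ω → β} (hW : Measurable W) (hZ : Measurable Z) (hWZ : IndepFun W Z P)
    {F : E × β → ℝ≥0∞} (hF : Measurable F) {S : Set (E × β)} (hS : MeasurableSet S)
    {K : ℝ≥0∞}
    (hFS : ∀ w, ∫⁻ z, F (w, z) ∂P.map Z ≤ K * P.map Z (Prod.mk w ⁻¹' S)) :
    ∫⁻ ω, F (W ω, Z ω) ∂P ≤ K * P {ω | (W ω, Z ω) ∈ S} := by
  have hWZm : Measurable fun ω => (W ω, Z ω) := hW.prodMk hZ
  have hmap := (indepFun_iff_map_prod_eq_prod_map_map hW.aemeasurable hZ.aemeasurable).1 hWZ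
  calc ∫⁻ ω, F (W ω, Z ω) ∂P = ∫⁻ p, F p ∂(P.map W).prod (P.map Z) := by
        rw [← hmap, lintegral_map hF hWZm]
    _ = ∫⁻ w, ∫⁻ z, F (w, z) ∂P.map Z ∂P.map W := lintegral_prod F hF.aemeasurable
    _ ≤ ∫⁻ w, K * P.map Z (Prod.mk w ⁻¹' S) ∂P.map W := lintegral_mono hFS
    _ = K * P {ω | (W ω, Z ω) ∈ S} := by
        rw [lintegral_const_mul _ (measurable_measure_prodMk_left hS), ← Measure.prod_apply hS,
          ← hmap, Measure.map_apply hWZm hS]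
        rfl

lemma ofReal_sub_sInf_eq_tsum {x : ℕ → ℝ} {l : ℝ} (h0 : x 0 < l) :
    ENNReal.ofReal (x (sInf {t | l ≤ x t}) - l)
      = ∑' n, if ∀ u ≤ n, x u < l then ENNReal.ofReal (x (n + 1) - l) else 0 := by
  by_cases hcross : ∃ t, l ≤ x t
  · set τ := sInf {t | l ≤ x t}
    have hτ : l ≤ x τ := Nat.sInf_mem hcross
    have hbefore : ∀ u < τ, x u < l := fun u hu => not_le.1 (Nat.notMem_of_lt_sInf hu)
    obtain ⟨m, hm⟩ : ∃ m, τ = m + 1 :=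
      Nat.exists_eq_succ_of_ne_zero fun h => (h ▸ h0).not_ge hτ
    rw [tsum_eq_single m, if_pos fun u hu => hbefore u (by omega), hm]
    intro n hn
    split_ifs with hpast
    · rcases lt_or_gt_of_ne hn with h | h
      · exact ENNReal.ofReal_eq_zero.2 (by linarith [hbefore (n + 1) (by omega)])
      · exact absurd (hm ▸ hτ) (not_le.2 (hpast (m + 1) h))
    · rfl
  · simp only [not_exists, not_le] at hcross
    rw [show {t | l ≤ x t} = ∅ from Set.eq_empty_of_forall_notMem fun t => not_le.2 (hcross t),
      Nat.sInf_empty, ENNReal.ofReal_eq_zero.2 (by linarith)]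
    refine (ENNReal.tsum_eq_zero.2 fun n => ?_).symm
    split_ifs
    exacts [ENNReal.ofReal_eq_zero.2 (by linarith [hcross (n + 1)]), rfl]

section GaussianWalk

variable {Ω : Type*} {s l : ℝ} {V : ℕ → Ω → ℝ} {X : ℕ → Ω → ℝ}

lemma walk_succ (hX : ∀ t ω, X t ω = s * t + ∑ i ∈ Finset.Icc 1 t, V i ω) (n : ℕ)
    (ω : Ω) : X (n + 1) ω = X n ω + s + V (n + 1) ω := by
  rw [hX, hX, Finset.sum_Icc_succ_top (by omega)]
  push_cast
  ring

variable [MeasurableSpace Ω] {P : Measure Ω}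

lemma indepFun_walk_past (hV : ∀ i, Measurable (V i)) (hindep : iIndepFun V P)
    (hX : ∀ t ω, X t ω = s * t + ∑ i ∈ Finset.Icc 1 t, V i ω) (n : ℕ) :
    IndepFun (fun ω (u : Fin (n + 1)) => X u ω) (V (n + 1)) P := by
  have hVs : ∀ i, StronglyMeasurable (V i) := fun i => (hV i).stronglyMeasurable
  have hpast : Measurable[Filtration.natural V hVs n] fun ω (u : Fin (n + 1)) => X u ω := by
    refine @measurable_pi_lambda _ _ _ (Filtration.natural V hVs n) _ _ fun u => ?_
    simp_rw [hX]
    refine measurable_const.add (Finset.measurable_sum _ fun i hi => ?_)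
    exact ((Filtration.stronglyAdapted_natural hVs i).mono
      ((Filtration.natural V hVs).mono (by simp at hi; omega))).measurable
  rw [IndepFun_iff_Indep]
  exact indep_of_indep_of_le_left (hindep.indep_comap_natural_of_lt hVs n.lt_succ_self).symm
    hpast.comap_le

lemma measurable_walk (hV : ∀ i, Measurable (V i))
    (hX : ∀ t ω, X t ω = s * t + ∑ i ∈ Finset.Icc 1 t, V i ω) (t : ℕ) :
    Measurable (X t) := by
  rw [show X t = _ from funext (hX t)]
  fun_prop

lemma measurableSet_forall_le_lt (hXm : ∀ t, Measurable (X t)) (l : ℝ) (n : ℕ) :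
    MeasurableSet {ω | ∀ u ≤ n, X u ω < l} := by
  simp only [ofPred_forall]
  exact .iInter fun u => .iInter fun _ => measurableSet_lt (hXm u) measurable_const

lemma lintegral_overshoot_step_le [IsFiniteMeasure P] (hs : 0 ≤ s) (hV : ∀ i, Measurable (V i))
    (hindep : iIndepFun V P) (hlaw : ∀ i, P.map (V i) = gaussianReal 0 1)
    (hX : ∀ t ω, X t ω = s * t + ∑ i ∈ Finset.Icc 1 t, V i ω) (n : ℕ) :
    ∫⁻ ω, (if ∀ u ≤ n, X u ω < l then ENNReal.ofReal (X (n + 1) ω - l) else 0) ∂P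
      ≤ ENNReal.ofReal (2 * s + 4) *
        P {ω | (∀ u ≤ n, X u ω < l) ∧ l ≤ X (n + 1) ω} := by
  have hXm := measurable_walk hV hX
  set B : Set (Fin (n + 1) → ℝ) := {w | ∀ u, w u < l}
  have hB : MeasurableSet B := by
    simp only [B, ofPred_forall]
    exact .iInter fun u => measurableSet_lt (measurable_pi_apply u) measurable_const
  set W : Ω → Fin (n + 1) → ℝ := fun ω u => X u ω
  set d : (Fin (n + 1) → ℝ) → ℝ := fun w => l - s - w (Fin.last n)
  set F : (Fin (n + 1) → ℝ) × ℝ → ℝ≥0∞ :=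
    (Prod.fst ⁻¹' B).indicator fun p => ENNReal.ofReal (p.2 - d p.1)
  set S : Set ((Fin (n + 1) → ℝ) × ℝ) := Prod.fst ⁻¹' B ∩ {p | d p.1 ≤ p.2}
  have hWB : ∀ ω, (W ω, V (n + 1) ω) ∈ Prod.fst ⁻¹' B ↔ ∀ u ≤ n, X u ω < l :=
    fun _ => ⟨fun h u hu => h ⟨u, by omega⟩, fun h u => h u (Nat.lt_succ_iff.1 u.2)⟩
  have hd : ∀ ω, V (n + 1) ω - d (W ω) = X (n + 1) ω - l := fun ω => by
    simp only [W, d, Fin.val_last, walk_succ hX]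
    ring
  calc ∫⁻ ω, (if ∀ u ≤ n, X u ω < l then ENNReal.ofReal (X (n + 1) ω - l) else 0) ∂P
      = ∫⁻ ω, F (W ω, V (n + 1) ω) ∂P := by
        classical
        simp only [F, indicator_apply, hWB, hd]
    _ ≤ ENNReal.ofReal (2 * s + 4) * P {ω | (W ω, V (n + 1) ω) ∈ S} := by
        refine lintegral_le_mul_measure_of_indepFun (measurable_pi_lambda W fun u => hXm u)
          (hV (n + 1)) (indepFun_walk_past hV hindep hX n)
          ((by fun_prop : Measurable _).indicator (measurable_fst hB))
          ((measurable_fst hB).inter (measurableSet_le (by fun_prop) measurable_snd)) fun w => ?_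
        rw [hlaw]
        by_cases hw : w ∈ B
        · simpa [F, S, hw, indicator_apply, preimage, Ici] using
            lintegral_ofReal_sub_le_mul_gaussianReal_Ici (c := 2 * s + 4) (d := d w)
              (by linarith) (by linarith [hw (Fin.last n)])
        · simp [hw]
    _ = ENNReal.ofReal (2 * s + 4) * P {ω | (∀ u ≤ n, X u ω < l) ∧ l ≤ X (n + 1) ω} := by
        congr 2 with ω
        simp only [S, mem_ofPred_eq, mem_inter_iff, hWB]
        rw [← sub_nonneg, hd, sub_nonneg]

lemma lintegral_ofReal_overshoot_le_of_measurable [IsProbabilityMeasure P] (hs : 0 ≤ s)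
    (hl : 0 < l) (hV : ∀ i, Measurable (V i)) (hindep : iIndepFun V P)
    (hlaw : ∀ i, P.map (V i) = gaussianReal 0 1)
    (hX : ∀ t ω, X t ω = s * t + ∑ i ∈ Finset.Icc 1 t, V i ω) :
    ∫⁻ ω, ENNReal.ofReal (X (sInf {t | l ≤ X t ω}) ω - l) ∂P
      ≤ ENNReal.ofReal (2 * s + 4) := by
  have hXm := measurable_walk hV hX
  set f : ℕ → Ω → ℝ≥0∞ := fun n ω =>
    if ∀ u ≤ n, X u ω < l then ENNReal.ofReal (X (n + 1) ω - l) else 0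
  set A : ℕ → Set Ω := fun n => {ω | (∀ u ≤ n, X u ω < l) ∧ l ≤ X (n + 1) ω}
  have hA : ∀ n, MeasurableSet (A n) := fun n =>
    (measurableSet_forall_le_lt hXm l n).inter (measurableSet_le measurable_const (hXm _))
  have hdisj : Pairwise (Function.onFun Disjoint A) := (pairwise_disjoint_on A).2 fun m n hmn =>
    disjoint_left.2 fun ω hm hn => (hn.1 (m + 1) hmn).not_ge hm.2
  calc ∫⁻ ω, ENNReal.ofReal (X (sInf {t | l ≤ X t ω}) ω - l) ∂P
      = ∫⁻ ω, ∑' n, f n ω ∂P :=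
        lintegral_congr fun ω => ofReal_sub_sInf_eq_tsum (x := (X · ω)) (by simpa [hX] using hl)
    _ = ∑' n, ∫⁻ ω, f n ω ∂P := lintegral_tsum fun n =>
        (Measurable.ite (measurableSet_forall_le_lt hXm l n) (by fun_prop)
          measurable_const).aemeasurable
    _ ≤ ∑' n, ENNReal.ofReal (2 * s + 4) * P (A n) :=
        ENNReal.tsum_le_tsum fun n => lintegral_overshoot_step_le hs hV hindep hlaw hX n
    _ = ENNReal.ofReal (2 * s + 4) * P (⋃ n, A n) := by
        rw [ENNReal.tsum_mul_left, measure_iUnion hdisj hA]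
    _ ≤ ENNReal.ofReal (2 * s + 4) := mul_le_of_le_one_right' prob_le_one

end GaussianWalk

/-- **Overshoot bound for the drift-`s` Gaussian random walk.** For all `l > 0` and
`s > 0`, `E(X_{τ_l} - l) ≤ 2s + 4`. -/
theorem gaussian_walk_overshoot_bound
    {Ω : Type*} [MeasurableSpace Ω] (P : Measure Ω) [IsProbabilityMeasure P]
    (s l : ℝ) (hs : 0 < s) (hl : 0 < l)
    (V : ℕ → Ω → ℝ)
    (hindep : iIndepFun V P)
    (hV : ∀ i, Measure.map (V i) P = gaussianReal 0 1)
    (X : ℕ → Ω → ℝ)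
    (hX : ∀ t ω, X t ω = s * t + ∑ i ∈ Finset.Icc 1 t, V i ω)
    (τ : Ω → ℕ) (hτ : ∀ ω, τ ω = sInf {t : ℕ | l ≤ X t ω}) :
    ∫⁻ ω, ENNReal.ofReal (X (τ ω) ω - l) ∂P ≤ ENNReal.ofReal (2 * s + 4) := by
  obtain ⟨V', hV'm, hVV'⟩ :
      ∃ V' : ℕ → Ω → ℝ, (∀ i, Measurable (V' i)) ∧ ∀ i, V i =ᵐ[P] V' i :=
    have hVae i : AEMeasurable (V i) P :=
      .of_map_ne_zero (hV i ▸ IsProbabilityMeasure.ne_zero _)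
    ⟨fun i => (hVae i).mk, fun i => (hVae i).measurable_mk, fun i => (hVae i).ae_eq_mk⟩
  set X' : ℕ → Ω → ℝ := fun t ω => s * t + ∑ i ∈ Finset.Icc 1 t, V' i ω with hX'
  have hXX' : ∀ᵐ ω ∂P, ∀ t, X t ω = X' t ω := by
    filter_upwards [ae_all_iff.2 hVV'] with ω hω t
    simp only [hX, hX', hω]
  calc ∫⁻ ω, ENNReal.ofReal (X (τ ω) ω - l) ∂P
      = ∫⁻ ω, ENNReal.ofReal (X' (sInf {t | l ≤ X' t ω}) ω - l) ∂P := by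
        refine lintegral_congr_ae (hXX'.mono fun ω hω => ?_)
        simp only [hτ, hω]
    _ ≤ ENNReal.ofReal (2 * s + 4) :=
        lintegral_ofReal_overshoot_le_of_measurable hs.le hl hV'm (hindep.congr hVV')
          (fun i => by rw [← Measure.map_congr (hVV' i), hV]) fun _ _ => rfl
end
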